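/- For d ≥ 1 and 1 ≤ i ≤ d, the center vertex of the uniformly stacked triangulation S_d is incident to exactly 3·2^{i−1} copies of S_{d−i}. -/

import Mathlib

open SimpleGraph

/-- The bounded triangular faces of the uniformly stacked triangulation `S_d`. -/
def SFaces : ℕ → Type
  | 0 => PUnit
  | d + 1 => SFaces d × Fin 3

/-- The vertices of the uniformly stacked triangulation `S_d`: going from `S_d` to `S_{d+1}`,
one new vertex is stacked into each bounded face of `S_d`. -/
def SVerts : ℕ → Type
  | 0 => Fin 3
  | d + 1 => SVerts d ⊕ SFaces d

/-- The three corner vertices of each bounded face of `S_d`.  A face `(f, j)` of `S_{d+1}` is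
one of the three faces obtained by stacking the new vertex `Sum.inr f` into the face `f`. -/
def corners : (d : ℕ) → SFaces d → Fin 3 → SVerts d
  | 0, _, i => i
  | d + 1, fj, i =>
      if i = 0 then Sum.inr fj.1
      else if i = 1 then Sum.inl (corners d fj.1 fj.2)
      else Sum.inl (corners d fj.1 (fj.2 + 1))

/-- The uniformly stacked triangulation `S_d` as a simple graph: two vertices are adjacent
iff they are distinct corners of a common bounded face. -/
def stacked (d : ℕ) : SimpleGraph (SVerts d) :=
  SimpleGraph.fromRel (fun a b =>
    ∃ (f : SFaces d) (i j : Fin 3), i ≠ j ∧ a = corners d f i ∧ b = corners d f j)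

/-- The three outer vertices `o₁, o₂, o₃` of `S_d`. -/
def outerVert : (d : ℕ) → Fin 3 → SVerts d
  | 0, i => i
  | d + 1, i => Sum.inl (outerVert d i)

/-- The center vertex of `S_{d+1}`: the unique vertex belonging to `S_1` but not to `S_0`. -/
def centerVert : (d : ℕ) → SVerts (d + 1)
  | 0 => Sum.inr PUnit.unit
  | d + 1 => Sum.inl (centerVert d)

instance SFaces.finite (d : ℕ) : Finite (SFaces d) := by
  induction d with
  | zero => unfold SFaces; infer_instance
  | succ d ih => unfold SFaces; infer_instance

lemma corners_zero (d : ℕ) (f : SFaces (d + 1)) :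
    corners (d + 1) f 0 = Sum.inr f.1 := rfl

lemma corners_one (d : ℕ) (f : SFaces (d + 1)) :
    corners (d + 1) f 1 = Sum.inl (corners d f.1 f.2) := rfl

lemma corners_two (d : ℕ) (f : SFaces (d + 1)) :
    corners (d + 1) f 2 = Sum.inl (corners d f.1 (f.2 + 1)) := rfl

lemma centerVert_succ (d : ℕ) : centerVert (d + 1) = Sum.inl (centerVert d) := rfl

lemma corners_injective : ∀ (d : ℕ) (f : SFaces d), Function.Injective (corners d f)
  | 0, _ => fun _ _ h => h
  | d + 1, ⟨g, t⟩ => by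
    intro i j h
    fin_cases i <;> fin_cases j <;>
      simp [corners] at h ⊢ <;>
      exact absurd (corners_injective d g (Sum.inl_injective h))
        (by fin_cases t <;> decide)

lemma stacked_center_key : ∀ m : ℕ,
    {f : SFaces (m + 1) | ∃ j : Fin 3, corners (m + 1) f j = centerVert m}.ncard
      = 3 * 2 ^ m := by
  intro m
  induction m with
  | zero =>
    have hu : {f : SFaces 1 | ∃ j : Fin 3, corners 1 f j = centerVert 0} = Set.univ := by
      ext f
      simp only [Set.mem_setOf_eq, Set.mem_univ, iff_true]
      exact ⟨0, rfl⟩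
    rw [hu, Set.ncard_univ]
    show Nat.card (PUnit × Fin 3) = 3
    simp
  | succ k ih =>
    set c := centerVert k with hc
    set T : Set (SFaces (k + 1) × Fin 3) := {p | corners (k + 1) p.1 p.2 = c} with hT
    set T' : Set (SFaces (k + 1) × Fin 3) := {p | corners (k + 1) p.1 (p.2 + 1) = c} with hT'
    have hA : {p : SFaces (k + 1) × Fin 3 |
        ∃ j : Fin 3, corners (k + 1 + 1) p j = centerVert (k + 1)} = T ∪ T' := by
      ext ⟨g, t⟩
      simp only [Set.mem_setOf_eq, Set.mem_union, hT, hT']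
      constructor
      · rintro ⟨j, hj⟩
        fin_cases j <;>
          simp only [corners_zero, corners_one, corners_two, centerVert_succ] at hj
        · exact absurd hj Sum.inr_ne_inl
        · exact Or.inl (Sum.inl_injective hj)
        · exact Or.inr (Sum.inl_injective hj)
      · rintro (hp | hp)
        · exact ⟨1, (corners_one (k + 1) (g, t)).trans (congrArg Sum.inl hp)⟩
        · exact ⟨2, (corners_two (k + 1) (g, t)).trans (congrArg Sum.inl hp)⟩
    have hdisj : Disjoint T T' := by
      rw [Set.disjoint_left]
      rintro ⟨g, t⟩ h1 h2
      simp only [hT, hT', Set.mem_setOf_eq] at h1 h2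
      have : t = t + 1 := corners_injective (k + 1) g (h1.trans h2.symm)
      exact absurd this (by fin_cases t <;> decide)
    have himg : T' = (fun p : SFaces (k + 1) × Fin 3 => (p.1, p.2 - 1)) '' T := by
      ext ⟨g, t⟩
      constructor
      · intro hp
        exact ⟨(g, t + 1), by simpa [hT, hT'] using hp, by simp⟩
      · rintro ⟨⟨g', t'⟩, hp, he⟩
        obtain ⟨rfl, rfl⟩ : g' = g ∧ t' - 1 = t := by
          simpa [Prod.ext_iff] using he
        simpa [hT, hT'] using hp
    have hinj : Function.Injective (fun p : SFaces (k + 1) × Fin 3 => (p.1, p.2 - 1)) := by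
      rintro ⟨g, t⟩ ⟨g', t'⟩ he
      simp only [Prod.ext_iff] at he ⊢
      exact ⟨he.1, sub_left_inj.mp he.2⟩
    have hfst : Prod.fst '' T
        = {f : SFaces (k + 1) | ∃ j : Fin 3, corners (k + 1) f j = c} := by
      ext g
      simp only [Set.mem_image, Set.mem_setOf_eq, hT, Prod.exists]
      constructor
      · rintro ⟨g', j, hj, rfl⟩
        exact ⟨j, hj⟩
      · rintro ⟨j, hj⟩
        exact ⟨g, j, hj, rfl⟩
    have hinjOn : Set.InjOn Prod.fst T := by
      rintro ⟨g, t⟩ h1 ⟨g', t'⟩ h2 he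
      simp only [hT, Set.mem_setOf_eq] at h1 h2
      cases he
      exact congrArg _ (corners_injective _ g (h1.trans h2.symm))
    have hTcard : T.ncard = 3 * 2 ^ k := by
      rw [← Set.ncard_image_of_injOn hinjOn, hfst]
      exact ih
    show ({p : SFaces (k + 1) × Fin 3 |
        ∃ j : Fin 3, corners (k + 1 + 1) p j = centerVert (k + 1)}).ncard = 3 * 2 ^ (k + 1)
    rw [hA, Set.ncard_union_eq hdisj T.toFinite T'.toFinite, himg,
      Set.ncard_image_of_injective _ hinj, hTcard]
    ring

/-- For `d ≥ 1` and `1 ≤ i ≤ d`, the center vertex of `S_d` is incident to exactly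
`3 · 2 ^ (i − 1)` copies of `S_{d−i}`.  In the recursive structure, the copies of `S_{d−i}`
in `S_d` correspond exactly to the bounded faces of `S_i` (each face of `S_i` hosts one copy,
whose outer vertices are the corners of that face), so the copies incident to the center
vertex `c` correspond to the faces of `S_i` having `c` as a corner.  Writing `i = m + 1`
(so that `1 ≤ i`), the number of such faces is `3 · 2 ^ m`. -/
theorem stacked_center_incident_copies (d m : ℕ) (h : m + 1 ≤ d) :
    {f : SFaces (m + 1) | ∃ j : Fin 3, corners (m + 1) f j = centerVert m}.ncard
      = 3 * 2 ^ m := stacked_center_key m
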